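/- Let β > 0. There is a unique t(β) ∈ (0,1/2) satisfying e^{β(1−t(β))} = 1 + (e^β − 1)·t(β), and t(β) is the unique maximizer over t ∈ (0,1) of the function t ↦ h(t) + J(r_{t,β}; β) − t ln r_{t,β}. -/

import Mathlib

/-- `J(r;γ) = ∫₀¹ ln(1 + r e^{−γx}) dx`. -/
noncomputable def Jint (r γ : ℝ) : ℝ :=
  ∫ x in (0:ℝ)..1, Real.log (1 + r * Real.exp (-γ * x))

/-- `r_{t,β} = (e^{βt} − 1)/(1 − e^{β(t−1)})`. -/
noncomputable def rtβ (t β : ℝ) : ℝ :=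
  (Real.exp (β * t) - 1) / (1 - Real.exp (β * (t - 1)))

/-- The binary entropy function (in nats). -/
noncomputable def binEnt (t : ℝ) : ℝ := -t * Real.log t - (1 - t) * Real.log (1 - t)

/-!
Write `F(t) = h(t) + J(r_t; β) - t log r_t` and `g(t) = e^{β(1-t)} - 1 - (e^β - 1) t`.
Since `1 + r_t = e^{βt} (1 + r_t e^{-β})` and `∂_r J(r; β) = (log (1 + r) - log (1 + r e^{-β})) / (β r)`,
the derivative of `J(r; β) - t log r` in `r` vanishes at `r = r_t`, so `F'(t) = log ((1 - t) / t) - log r_t`.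
Moreover `(1 - t) / t - r_t = g(t) / (t (e^{β(1-t)} - 1))`, so `F'` has the sign of `g`.
As `g` is strictly decreasing with `g(0) > 0 > g(1/2) = -(e^{β/2} - 1)² / 2`, it has a unique zero
`t(β) ∈ (0, 1/2)`, and `F` strictly increases before `t(β)` and strictly decreases after it.
-/

open Real Set MeasureTheory intervalIntegral

noncomputable def criticalGap (β t : ℝ) : ℝ := exp (β * (1 - t)) - (1 + (exp β - 1) * t)

noncomputable def objective (β t : ℝ) : ℝ :=
  binEnt t + Jint (rtβ t β) β - t * log (rtβ t β)

lemma lt_of_hasDerivAt_pos_of_neg {f f' : ℝ → ℝ} {a b c s : ℝ}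
    (hf : ∀ x ∈ Ioo a b, HasDerivAt f (f' x) x)
    (hpos : ∀ x ∈ Ioo a c, 0 < f' x) (hneg : ∀ x ∈ Ioo c b, f' x < 0)
    (hc : c ∈ Ioo a b) (hs : s ∈ Ioo a b) (hsc : s ≠ c) : f s < f c := by
  have hcont : ContinuousOn f (Ioo a b) := fun x hx => (hf x hx).continuousAt.continuousWithinAt
  rcases hsc.lt_or_gt with hlt | hgt
  · have hsub : Icc s c ⊆ Ioo a b := Icc_subset_Ioo hs.1 hc.2
    refine strictMonoOn_of_hasDerivWithinAt_pos (convex_Icc s c) (hcont.mono hsub)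
      (fun x hx => (hf x (hsub (interior_subset hx))).hasDerivWithinAt) (fun x hx => ?_)
      (left_mem_Icc.2 hlt.le) (right_mem_Icc.2 hlt.le) hlt
    rw [interior_Icc] at hx
    exact hpos x ⟨hs.1.trans hx.1, hx.2⟩
  · have hsub : Icc c s ⊆ Ioo a b := Icc_subset_Ioo hc.1 hs.2
    refine strictAntiOn_of_hasDerivWithinAt_neg (convex_Icc c s) (hcont.mono hsub)
      (fun x hx => (hf x (hsub (interior_subset hx))).hasDerivWithinAt) (fun x hx => ?_)
      (left_mem_Icc.2 hgt.le) (right_mem_Icc.2 hgt.le) hgt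
    rw [interior_Icc] at hx
    exact hneg x ⟨hx.1, hx.2.trans hs.2⟩

section CriticalGap

variable {β : ℝ}

lemma strictAnti_criticalGap (hβ : 0 < β) : StrictAnti (criticalGap β) := by
  intro s u hsu
  have hexp : exp (β * (1 - u)) < exp (β * (1 - s)) := exp_lt_exp.2 (by nlinarith)
  have hE : 1 < exp β := one_lt_exp_iff.2 hβ
  unfold criticalGap
  nlinarith

lemma exists_criticalGap_eq_zero (hβ : 0 < β) :
    ∃ t ∈ Ioo (0 : ℝ) (1 / 2), criticalGap β t = 0 := by
  have hzero : 0 < criticalGap β 0 := by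
    simpa [criticalGap] using one_lt_exp_iff.2 hβ
  have hhalf : criticalGap β (1 / 2) < 0 := by
    have hsq : exp β = exp (β / 2) ^ 2 := by rw [← exp_nat_mul]; ring_nf
    have h1 : 1 < exp (β / 2) := one_lt_exp_iff.2 (by positivity)
    have hcg : criticalGap β (1 / 2) = -(exp (β / 2) - 1) ^ 2 / 2 := by
      rw [criticalGap, hsq]; ring_nf
    rw [hcg]
    nlinarith
  have hcont : Continuous (criticalGap β) := by unfold criticalGap; fun_prop
  exact intermediate_value_Ioo' (by norm_num) hcont.continuousOn ⟨hhalf, hzero⟩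

end CriticalGap

section Rate

variable {β t : ℝ}

lemma rtβ_eq_div : rtβ t β = (exp β - exp (β * (1 - t))) / (exp (β * (1 - t)) - 1) := by
  have hden : exp (β * (t - 1)) * exp (β * (1 - t)) = 1 := by
    rw [← exp_add, ← exp_zero]; ring_nf
  have hnum : exp (β * t) * exp (β * (1 - t)) = exp β := by
    rw [← exp_add]; ring_nf
  rw [rtβ, ← mul_div_mul_right _ _ (exp_pos (β * (1 - t))).ne']
  congr 1
  · linear_combination hnum
  · linear_combination -hden

lemma one_lt_exp_mul_one_sub (hβ : 0 < β) (ht : t < 1) : 1 < exp (β * (1 - t)) :=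
  one_lt_exp_iff.2 (mul_pos hβ (sub_pos.2 ht))

lemma rtβ_pos (hβ : 0 < β) (ht : t ∈ Ioo (0 : ℝ) 1) : 0 < rtβ t β := by
  have hlt : exp (β * (1 - t)) < exp β := exp_lt_exp.2 (by nlinarith [ht.1])
  rw [rtβ_eq_div]
  exact div_pos (sub_pos.2 hlt) (sub_pos.2 (one_lt_exp_mul_one_sub hβ ht.2))

lemma one_add_rtβ (hβ : 0 < β) (ht : t < 1) :
    1 + rtβ t β = exp (β * t) * (1 + rtβ t β * exp (-β)) := by
  have hA := (sub_pos.2 (one_lt_exp_mul_one_sub hβ ht)).ne'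
  have hexp : exp (β * t) * exp (β * (1 - t)) = exp β := by rw [← exp_add]; ring_nf
  have hinv : exp β * exp (-β) = 1 := by rw [← exp_add, add_neg_cancel, exp_zero]
  rw [rtβ_eq_div]
  field_simp
  linear_combination (exp (-β) - 1) * hexp + (1 - exp (β * t)) * hinv

lemma one_sub_div_sub_rtβ (hβ : 0 < β) (ht : t ∈ Ioo (0 : ℝ) 1) :
    (1 - t) / t - rtβ t β = criticalGap β t / (t * (exp (β * (1 - t)) - 1)) := by
  have hA := (sub_pos.2 (one_lt_exp_mul_one_sub hβ ht.2)).ne'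
  have ht0 := ht.1.ne'
  rw [rtβ_eq_div, criticalGap]
  generalize exp (β * (1 - t)) = A at hA ⊢
  field_simp
  ring

lemma differentiableAt_rtβ (hβ : 0 < β) (ht : t < 1) :
    DifferentiableAt ℝ (fun s => rtβ s β) t := by
  have hden : 1 - exp (β * (t - 1)) ≠ 0 :=
    (sub_pos.2 (exp_lt_one_iff.2 (mul_neg_of_pos_of_neg hβ (sub_neg.2 ht)))).ne'
  unfold rtβ
  exact DifferentiableAt.div (by fun_prop) (by fun_prop) hden

end Rate

section Integral

variable {β r : ℝ}

lemma hasDerivAt_Jint (β : ℝ) (hr : 0 < r) :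
    HasDerivAt (fun r => Jint r β)
      (∫ x in (0 : ℝ)..1, exp (-β * x) / (1 + r * exp (-β * x))) r := by
  have hball : ∀ ρ ∈ Metric.ball r (r / 2), 0 < ρ ∧ r < 2 * ρ := fun ρ hρ => by
    have := abs_lt.1 (Real.dist_eq ρ r ▸ Metric.mem_ball.1 hρ)
    constructor <;> linarith [this.1]
  refine (hasDerivAt_integral_of_dominated_loc_of_deriv_le (μ := volume)
    (F := fun ρ x => log (1 + ρ * exp (-β * x)))
    (F' := fun ρ x => exp (-β * x) / (1 + ρ * exp (-β * x))) (bound := fun _ => 2 / r)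
    (Metric.ball_mem_nhds r (half_pos hr)) (Filter.Eventually.of_forall fun ρ => ?_) ?_ ?_
    (Filter.Eventually.of_forall fun x _ ρ hρ => ?_) intervalIntegrable_const
    (Filter.Eventually.of_forall fun x _ ρ hρ => ?_)).2
  · exact (by fun_prop : Measurable fun x => log (1 + ρ * exp (-β * x))).aestronglyMeasurable
  · exact (Continuous.log (by fun_prop) fun x => (by positivity : 0 < 1 + r * exp (-β * x)).ne'
      ).intervalIntegrable 0 1
  · exact (by fun_prop : Measurable fun x => exp (-β * x) / (1 + r * exp (-β * x))
      ).aestronglyMeasurable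
  · obtain ⟨hρ0, hρr⟩ := hball ρ hρ
    have hden : 0 < 1 + ρ * exp (-β * x) := by positivity
    rw [norm_of_nonneg (by positivity), div_le_div_iff₀ hden hr]
    nlinarith [exp_pos (-β * x)]
  · have hden : 0 < 1 + ρ * exp (-β * x) := by have := (hball ρ hρ).1; positivity
    simpa using (((hasDerivAt_id ρ).mul_const (exp (-β * x))).const_add 1).log hden.ne'

lemma integral_exp_div_one_add_mul_exp (hβ : β ≠ 0) (hr : 0 < r) :
    ∫ x in (0 : ℝ)..1, exp (-β * x) / (1 + r * exp (-β * x))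
      = (log (1 + r) - log (1 + r * exp (-β))) / (β * r) := by
  have hden : ∀ x, 0 < 1 + r * exp (-β * x) := fun x => by positivity
  have hprim : ∀ x ∈ uIcc (0 : ℝ) 1,
      HasDerivAt (fun x => -log (1 + r * exp (-β * x)) / (β * r))
        (exp (-β * x) / (1 + r * exp (-β * x))) x := fun x _ => by
    have h : HasDerivAt (fun x => -log (1 + r * exp (-β * x)) / (β * r))
        (-(r * (exp (-β * x) * (-β * 1)) / (1 + r * exp (-β * x))) / (β * r)) x :=
      (((((hasDerivAt_id x).const_mul (-β)).exp.const_mul r).const_add 1).log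
        (hden x).ne').neg.div_const (β * r)
    exact h.congr_deriv (by field_simp)
  rw [integral_eq_sub_of_hasDerivAt hprim ((Continuous.div (by fun_prop) (by fun_prop)
    fun x => (hden x).ne').intervalIntegrable 0 1)]
  simp only [mul_zero, exp_zero, mul_one]
  ring

end Integral

section Objective

variable {β t : ℝ}

/-- The defining property of `r_{t,β}`: it is the point where `r ↦ J(r;β) - t log r` is stationary. -/
lemma hasDerivAt_Jint_rtβ (hβ : 0 < β) (ht : t ∈ Ioo (0 : ℝ) 1) :
    HasDerivAt (fun r => Jint r β) (t / rtβ t β) (rtβ t β) := by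
  have hr := rtβ_pos hβ ht
  have hJ := hasDerivAt_Jint β hr
  rwa [integral_exp_div_one_add_mul_exp hβ.ne' hr, one_add_rtβ hβ ht.2,
    log_mul (exp_pos _).ne' (by positivity), log_exp, add_sub_cancel_right,
    mul_div_mul_left _ _ hβ.ne'] at hJ

lemma binEnt_eq_binEntropy : binEnt = binEntropy := by
  funext t
  simp only [binEnt, binEntropy, log_inv]
  ring

lemma hasDerivAt_objective (hβ : 0 < β) (ht : t ∈ Ioo (0 : ℝ) 1) :
    HasDerivAt (objective β) (log (1 - t) - log t - log (rtβ t β)) t := by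
  have hr := rtβ_pos hβ ht
  have hρ := (differentiableAt_rtβ hβ ht.2).hasDerivAt
  have hH := binEnt_eq_binEntropy ▸ hasDerivAt_binEntropy ht.1.ne' ht.2.ne
  have hJ := (hasDerivAt_Jint_rtβ hβ ht).comp t hρ
  have hlog := (hasDerivAt_id t).mul ((hasDerivAt_log hr.ne').comp t hρ)
  refine ((hH.add hJ).sub hlog).congr_deriv ?_
  simp only [Function.comp_apply, id]
  field_simp
  ring

lemma log_one_sub_sub_log_sub_log_rtβ_pos (hβ : 0 < β) (ht : t ∈ Ioo (0 : ℝ) 1)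
    (hgap : 0 < criticalGap β t) : 0 < log (1 - t) - log t - log (rtβ t β) := by
  have hlt : rtβ t β < (1 - t) / t := by
    have h := one_sub_div_sub_rtβ hβ ht
    have : 0 < criticalGap β t / (t * (exp (β * (1 - t)) - 1)) :=
      div_pos hgap (mul_pos ht.1 (sub_pos.2 (one_lt_exp_mul_one_sub hβ ht.2)))
    linarith
  have h := log_lt_log (rtβ_pos hβ ht) hlt
  rw [log_div (sub_pos.2 ht.2).ne' ht.1.ne'] at h
  linarith

lemma log_one_sub_sub_log_sub_log_rtβ_neg (hβ : 0 < β) (ht : t ∈ Ioo (0 : ℝ) 1)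
    (hgap : criticalGap β t < 0) : log (1 - t) - log t - log (rtβ t β) < 0 := by
  have hlt : (1 - t) / t < rtβ t β := by
    have h := one_sub_div_sub_rtβ hβ ht
    have : criticalGap β t / (t * (exp (β * (1 - t)) - 1)) < 0 :=
      div_neg_of_neg_of_pos hgap (mul_pos ht.1 (sub_pos.2 (one_lt_exp_mul_one_sub hβ ht.2)))
    linarith
  have h := log_lt_log (div_pos (sub_pos.2 ht.2) ht.1) hlt
  rw [log_div (sub_pos.2 ht.2).ne' ht.1.ne'] at h
  linarith

end Objective

theorem hard_critical_maximizer (β : ℝ) (hβ : 0 < β) :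
    ∃ tβ : ℝ, tβ ∈ Set.Ioo (0:ℝ) (1/2) ∧
      Real.exp (β * (1 - tβ)) = 1 + (Real.exp β - 1) * tβ ∧
      (∀ s ∈ Set.Ioo (0:ℝ) (1/2),
        Real.exp (β * (1 - s)) = 1 + (Real.exp β - 1) * s → s = tβ) ∧
      (∀ s ∈ Set.Ioo (0:ℝ) 1, s ≠ tβ →
        binEnt s + Jint (rtβ s β) β - s * Real.log (rtβ s β)
          < binEnt tβ + Jint (rtβ tβ β) β - tβ * Real.log (rtβ tβ β)) := by
  obtain ⟨t, ht, hgap⟩ := exists_criticalGap_eq_zero hβ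
  have hanti := strictAnti_criticalGap hβ
  have ht1 : t ∈ Ioo (0 : ℝ) 1 := ⟨ht.1, ht.2.trans (by norm_num)⟩
  refine ⟨t, ht, sub_eq_zero.1 hgap, fun s _ hs => hanti.injective ?_, fun s hs hst => ?_⟩
  · rw [hgap, criticalGap, hs, sub_self]
  · refine lt_of_hasDerivAt_pos_of_neg (fun x hx => hasDerivAt_objective hβ hx)
      (fun x hx => ?_) (fun x hx => ?_) ht1 hs hst
    · exact log_one_sub_sub_log_sub_log_rtβ_pos hβ ⟨hx.1, hx.2.trans ht1.2⟩ (hgap ▸ hanti hx.2)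
    · exact log_one_sub_sub_log_sub_log_rtβ_neg hβ ⟨ht1.1.trans hx.1, hx.2⟩ (hgap ▸ hanti hx.1)
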